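/- Assume additionally w(−1) < w(1). Let η be the Markov chain on ℤ with transition kernel P and let θ₀ := min{n ≥ 0 : η(n) = 0}. Then there exist γ > 0 and constants C < ∞, β > 0 such that for all y ∈ ℤ with y ≥ 0, E[exp(γ·θ₀) | η(0) = y] ≤ C·e^{(β/2)·y}. -/

import Mathlib

open MeasureTheory Filter
open scoped BigOperators ENNReal

noncomputable section

/-- `p(x) = w(-x)/(w(x)+w(-x))`. -/
def pfun (w : ℤ → ℝ) (x : ℤ) : ℝ := w (-x) / (w x + w (-x))

/-- `q(x) = w(x)/(w(x)+w(-x))`. -/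
def qfun (w : ℤ → ℝ) (x : ℤ) : ℝ := w x / (w x + w (-x))

/-- The Markov transition kernel `P(x,y)`. -/
def Pker (w : ℤ → ℝ) (x y : ℤ) : ℝ :=
  if x - 1 ≤ y then (∏ z ∈ Finset.Icc x y, pfun w z) * qfun w (y + 1) else 0

/-- The `m`-step transition kernel. -/
def Pm (w : ℤ → ℝ) : ℕ → ℤ → ℤ → ℝ
  | 0, x, y => if x = y then 1 else 0
  | m + 1, x, y => ∑' z : ℤ, Pm w m x z * Pker w z y

/-- The normalizing constant `Z`. -/
def Zconst (w : ℤ → ℝ) : ℝ :=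
  2 * ∑' x : ℕ, ∏ z ∈ Finset.Icc (1 : ℤ) (x : ℤ), w (-z) / w z

/-- The stationary distribution `ρ`. -/
def rho (w : ℤ → ℝ) (x : ℤ) : ℝ :=
  (Zconst w)⁻¹ * ∏ z ∈ Finset.Icc (1 : ℤ) (|2 * x + 1| / 2), w (-z) / w z

/-- The weight function `w` is positive, nondecreasing and satisfies
`lim_{z→∞} (w(z) - w(-z)) > 0`. -/
def GoodWeight (w : ℤ → ℝ) : Prop :=
  (∀ z, 0 < w z) ∧ (∀ z, w z ≤ w (z + 1)) ∧
    ∃ c > (0 : ℝ), ∀ᶠ z : ℤ in atTop, c ≤ w z - w (-z)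

/-- `η` is a Markov chain with (sub)stochastic kernel `K` started at `a`,
characterized through its cylinder probabilities. -/
def KChain {Ω : Type*} [MeasurableSpace Ω] (μ : Measure Ω)
    (K : ℤ → ℤ → ℝ) (η : ℕ → Ω → ℤ) (a : ℤ) : Prop :=
  (∀ n, Measurable (η n)) ∧
  ∀ (n : ℕ) (x : ℕ → ℤ),
    μ {ω | ∀ i ≤ n, η i ω = x i} =
      ENNReal.ofReal ((if x 0 = a then (1 : ℝ) else 0) *
        ∏ i ∈ Finset.range n, K (x i) (x (i + 1)))

/-!
From `x ≥ 1` the chain steps down to `x - 1` with probability `1 - p(x)` and up by at least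
`k ≥ 0` with probability `∏_{z=x}^{x+k} p(z) ≤ p(1)^(k+1)`, where `p(1) < 1/2`. By Abel
summation, `V(x) = c^x` with `c = 1/(2 p(1))` satisfies `∑_{z ≠ 0} P(x,z) V(z) ≤ r V(x)` on
`x ≥ 1` with `r = 4 p(1) (1 - p(1)) < 1`. Summing over paths, the chain started at `y` avoids `0`
for `n` steps with probability at most `r^n c^y`, a geometric tail for `θ₀`; this gives
`E[exp(γ θ₀)] < ∞` for `e^γ = r^(-1/2)`.
-/

section PathSums

variable {α : Type*} (K : α → α → ℝ≥0∞)

def pathMass : ℕ → α → ℝ≥0∞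
  | 0, _ => 1
  | n + 1, x => ∑' z, K x z * pathMass n z

theorem tsum_mul_prod_eq_tsum_mul_pathMass (n : ℕ) (φ : α → ℝ≥0∞) :
    ∑' v : Fin (n + 1) → α, φ (v 0) * ∏ i : Fin n, K (v i.castSucc) (v i.succ) =
      ∑' x, φ x * pathMass K n x := by
  induction n generalizing φ with
  | zero =>
    rw [← (Equiv.funUnique (Fin 1) α).symm.tsum_eq]
    simp [pathMass]
  | succ n ih =>
    rw [← (Fin.consEquiv fun _ => α).tsum_eq]
    simp only [Fin.consEquiv_apply, Fin.prod_univ_succ, Fin.castSucc_zero, Fin.cons_zero,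
      Fin.cons_succ, ← Fin.succ_castSucc]
    rw [ENNReal.tsum_prod (f := fun x (v : Fin (n + 1) → α) =>
      φ x * (K x (v 0) * ∏ i : Fin n, K (v i.castSucc) (v i.succ)))]
    refine tsum_congr fun x => ?_
    rw [ENNReal.tsum_mul_left, ih, pathMass]

variable {K}

theorem pathMass_le_of_drift {T : Set α} {V : α → ℝ≥0∞} {r : ℝ≥0∞}
    (hT : ∀ x ∈ T, ∀ z, K x z ≠ 0 → z ∈ T) (hV : ∀ x ∈ T, 1 ≤ V x)
    (hdrift : ∀ x ∈ T, ∑' z, K x z * V z ≤ r * V x) (n : ℕ) :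
    ∀ x ∈ T, pathMass K n x ≤ r ^ n * V x := by
  induction n with
  | zero => simpa [pathMass] using hV
  | succ n ih =>
    intro x hx
    calc pathMass K (n + 1) x ≤ ∑' z, K x z * (r ^ n * V z) := by
          refine ENNReal.tsum_le_tsum fun z => ?_
          by_cases hz : K x z = 0
          · simp [hz]
          · exact mul_le_mul_right (ih z (hT x hx z hz)) _
      _ = r ^ n * ∑' z, K x z * V z := by
          rw [← ENNReal.tsum_mul_left]; congr 1; ext z; ring
      _ ≤ r ^ (n + 1) * V x := by
          rw [pow_succ, mul_assoc]; exact mul_le_mul_right (hdrift x hx) _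

end PathSums

def killKernel (K : ℤ → ℤ → ℝ) (S : Set ℤ) (x : ℤ) : ℤ → ℝ≥0∞ :=
  S.indicator fun z => ENNReal.ofReal (K x z)

theorem KChain.measure_forall_mem_le {Ω : Type*} [MeasurableSpace Ω] {μ : Measure Ω}
    {K : ℤ → ℤ → ℝ} {η : ℕ → Ω → ℤ} {a : ℤ} (hη : KChain μ K η a) (hK : ∀ x y, 0 ≤ K x y)
    (S : Set ℤ) (n : ℕ) :
    μ {ω | ∀ i ≤ n, η i ω ∈ S} ≤ S.indicator (pathMass (killKernel K S) n) a := by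
  set C : (Fin (n + 1) → ℤ) → Set Ω :=
    fun v => {ω | (∀ i, v i ∈ S) ∧ ∀ i ≤ n, η i ω = v (Fin.clamp i n)}
  have hcover : {ω | ∀ i ≤ n, η i ω ∈ S} ⊆ ⋃ v, C v := fun ω hω =>
    Set.mem_iUnion.2 ⟨fun i => η i ω, fun i => hω i (Nat.lt_succ_iff.1 i.2),
      fun i hi => by simp [Fin.clamp, min_eq_left hi]⟩
  have hcyl : ∀ v, μ (C v) ≤ S.indicator (fun x => if x = a then 1 else 0) (v 0) *
      ∏ i : Fin n, killKernel K S (v i.castSucc) (v i.succ) := by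
    intro v
    by_cases hv : ∀ i, v i ∈ S
    · have hC : C v = {ω | ∀ i ≤ n, η i ω = v (Fin.clamp i n)} := by simp [C, hv]
      rw [hC, hη.2, ENNReal.ofReal_mul (by positivity), ENNReal.ofReal_prod_of_nonneg
        fun i _ => hK _ _, ← Fin.prod_univ_eq_prod_range]
      have h0 : Fin.clamp 0 n = 0 := Fin.ext (by simp [Fin.clamp])
      have hcs : ∀ i : Fin n, Fin.clamp i n = i.castSucc :=
        fun i => Fin.ext (by simp [Fin.clamp, i.2.le])
      have hsucc : ∀ i : Fin n, Fin.clamp (i + 1) n = i.succ :=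
        fun i => Fin.ext (by simp [Fin.clamp, Nat.succ_le_of_lt i.2])
      apply le_of_eq
      simp [h0, hcs, hsucc, killKernel, hv, apply_ite ENNReal.ofReal]
    · have hC : C v = ∅ := Set.eq_empty_iff_forall_notMem.2 fun ω hω => hv hω.1
      simp [hC]
  calc μ {ω | ∀ i ≤ n, η i ω ∈ S} ≤ ∑' v, μ (C v) := (measure_mono hcover).trans
        (measure_iUnion_le C)
    _ ≤ ∑' v : Fin (n + 1) → ℤ, S.indicator (fun x => if x = a then 1 else 0) (v 0) *
        ∏ i : Fin n, killKernel K S (v i.castSucc) (v i.succ) := ENNReal.tsum_le_tsum hcyl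
    _ = S.indicator (pathMass (killKernel K S) n) a := by
      rw [tsum_mul_prod_eq_tsum_mul_pathMass, tsum_eq_single a fun x hx => by simp [hx]]
      by_cases ha : a ∈ S <;> simp [ha]

section Hitting

variable {Ω α : Type*} [MeasurableSpace Ω] {μ : Measure Ω} {η : ℕ → Ω → α} {a : α}
  {s b : ℝ}

theorem measure_forall_ne_eq_zero (hs0 : 0 ≤ s) (hs1 : s < 1)
    (hstay : ∀ n, μ {ω | ∀ m ≤ n, η m ω ≠ a} ≤ ENNReal.ofReal (s ^ (2 * n) * b)) :
    μ {ω | ∀ n, η n ω ≠ a} = 0 := by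
  have hlim : Tendsto (fun n : ℕ => ENNReal.ofReal (s ^ (2 * n) * b)) atTop (nhds 0) := by
    rw [← ENNReal.ofReal_zero, ← zero_mul b]
    simp_rw [pow_mul]
    exact ENNReal.tendsto_ofReal ((tendsto_pow_atTop_nhds_zero_of_lt_one (by positivity)
      (by nlinarith)).mul_const b)
  have hsub : ∀ n, {ω | ∀ k, η k ω ≠ a} ⊆ {ω | ∀ m ≤ n, η m ω ≠ a} := fun n ω hω m _ => hω m
  exact le_antisymm (ge_of_tendsto' hlim fun n => (measure_mono (hsub n)).trans (hstay n)) bot_le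

theorem tsum_exp_mul_measure_hit_add_top_le [IsProbabilityMeasure μ] (hs0 : 0 < s)
    (hs1 : s < 1) (hb : 1 ≤ b)
    (hstay : ∀ n, μ {ω | ∀ m ≤ n, η m ω ≠ a} ≤ ENNReal.ofReal (s ^ (2 * n) * b)) :
    (∑' n : ℕ, ENNReal.ofReal (Real.exp (Real.log s⁻¹ * n)) *
        μ {ω | η n ω = a ∧ ∀ m < n, η m ω ≠ a}) + ⊤ * μ {ω | ∀ n, η n ω ≠ a} ≤
      ENNReal.ofReal ((1 + s⁻¹ * (1 - s)⁻¹) * b) := by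
  have hterm : ∀ n : ℕ, ENNReal.ofReal (Real.exp (Real.log s⁻¹ * (n + 1 : ℕ))) *
      μ {ω | η (n + 1) ω = a ∧ ∀ m < n + 1, η m ω ≠ a} ≤ ENNReal.ofReal (s⁻¹ * b * s ^ n) := by
    intro n
    have hexp : Real.exp (Real.log s⁻¹ * (n + 1 : ℕ)) = s⁻¹ ^ (n + 1) := by
      rw [mul_comm, Real.exp_nat_mul, Real.exp_log (inv_pos.2 hs0)]
    calc _ ≤ ENNReal.ofReal (s⁻¹ ^ (n + 1)) * ENNReal.ofReal (s ^ (2 * n) * b) := by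
          rw [hexp]
          exact mul_le_mul_right ((measure_mono fun ω hω m hm => hω.2 m (by omega)).trans
            (hstay n)) _
      _ = ENNReal.ofReal (s⁻¹ * b * s ^ n) := by
          rw [← ENNReal.ofReal_mul (by positivity)]
          congr 1
          rw [two_mul, pow_add, pow_succ, inv_pow]
          field_simp
          ring
  have hgeom : HasSum (fun n : ℕ => s⁻¹ * b * s ^ n) (s⁻¹ * b * (1 - s)⁻¹) :=
    (hasSum_geometric_of_lt_one hs0.le hs1).mul_left _
  have hM : 0 ≤ s⁻¹ * (1 - s)⁻¹ * b := by
    have := sub_pos.2 hs1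
    positivity
  rw [measure_forall_ne_eq_zero hs0.le hs1 hstay, mul_zero, add_zero]
  calc _ = ENNReal.ofReal (Real.exp (Real.log s⁻¹ * (0 : ℕ))) *
          μ {ω | η 0 ω = a ∧ ∀ m < 0, η m ω ≠ a} +
        ∑' n : ℕ, ENNReal.ofReal (Real.exp (Real.log s⁻¹ * (n + 1 : ℕ))) *
          μ {ω | η (n + 1) ω = a ∧ ∀ m < n + 1, η m ω ≠ a} := tsum_eq_zero_add' ENNReal.summable
    _ ≤ ENNReal.ofReal b + ∑' n : ℕ, ENNReal.ofReal (s⁻¹ * b * s ^ n) := by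
        gcongr
        · simpa using prob_le_one.trans (ENNReal.one_le_ofReal.2 hb)
        · exact hterm _
    _ = ENNReal.ofReal ((1 + s⁻¹ * (1 - s)⁻¹) * b) := by
        rw [← ENNReal.ofReal_tsum_of_nonneg (fun n => by positivity) hgeom.summable,
          hgeom.tsum_eq, ← ENNReal.ofReal_add (by linarith) (by linarith)]
        ring_nf

end Hitting

theorem hasSum_sub_succ_mul_pow {A : ℕ → ℝ} {c : ℝ} (hc : c ≠ 0)
    (hA : Summable fun k => A k * c ^ k) :
    HasSum (fun k => (A k - A (k + 1)) * c ^ k)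
      (c⁻¹ * A 0 + (1 - c⁻¹) * ∑' k, A k * c ^ k) := by
  have hshift : HasSum (fun k => A (k + 1) * c ^ (k + 1)) (∑' k, A k * c ^ k - A 0) := by
    simpa using (hasSum_nat_add_iff' 1).2 hA.hasSum
  have hterm : (fun k => (A k - A (k + 1)) * c ^ k) =
      fun k => A k * c ^ k - c⁻¹ * (A (k + 1) * c ^ (k + 1)) := by
    ext k
    rw [pow_succ]
    field_simp
  rw [hterm, show c⁻¹ * A 0 + (1 - c⁻¹) * ∑' k, A k * c ^ k =
    ∑' k, A k * c ^ k - c⁻¹ * (∑' k, A k * c ^ k - A 0) by ring]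
  exact hA.hasSum.sub (hshift.mul_left c⁻¹)

section Pker

variable {w : ℤ → ℝ}

-- the probability that a step from `x` goes up by at least `k`
def jumpTail (w : ℤ → ℝ) (x : ℤ) (k : ℕ) : ℝ := ∏ z ∈ Finset.Icc x (x + k), pfun w z

theorem pfun_nonneg (hpos : ∀ z, 0 < w z) (z : ℤ) : 0 ≤ pfun w z :=
  div_nonneg (hpos _).le (add_pos (hpos _) (hpos _)).le

theorem qfun_eq_one_sub_pfun (hpos : ∀ z, 0 < w z) (z : ℤ) : qfun w z = 1 - pfun w z := by
  have := add_pos (hpos z) (hpos (-z))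
  rw [pfun, qfun]
  field_simp
  ring

theorem pfun_le_pfun_one (hpos : ∀ z, 0 < w z) (hmono : Monotone w) {z : ℤ} (hz : 1 ≤ z) :
    pfun w z ≤ pfun w 1 := by
  rw [pfun, pfun, div_le_div_iff₀ (add_pos (hpos _) (hpos _)) (add_pos (hpos _) (hpos _))]
  have h1 : w (-z) ≤ w (-1) := hmono (by omega)
  have h2 : w 1 ≤ w z := hmono hz
  nlinarith [hpos z, hpos (-z), hpos 1, hpos (-1)]

theorem pfun_one_lt_half (hpos : ∀ z, 0 < w z) (hw1 : w (-1) < w 1) : pfun w 1 < 1 / 2 := by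
  rw [pfun, div_lt_iff₀ (add_pos (hpos _) (hpos _))]
  linarith

theorem jumpTail_succ (x : ℤ) (k : ℕ) :
    jumpTail w x (k + 1) = jumpTail w x k * pfun w (x + k + 1) := by
  have h : Finset.Icc x (x + (k + 1 : ℕ)) = insert (x + k + 1) (Finset.Icc x (x + k)) := by
    ext z; simp only [Finset.mem_Icc, Finset.mem_insert]; omega
  rw [jumpTail, jumpTail, h, Finset.prod_insert (by simp), mul_comm]

theorem jumpTail_nonneg (hpos : ∀ z, 0 < w z) (x : ℤ) (k : ℕ) : 0 ≤ jumpTail w x k :=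
  Finset.prod_nonneg fun z _ => pfun_nonneg hpos z

theorem jumpTail_le_pow (hpos : ∀ z, 0 < w z) (hmono : Monotone w) {x : ℤ} (hx : 1 ≤ x)
    (k : ℕ) : jumpTail w x k ≤ pfun w 1 ^ (k + 1) := by
  calc jumpTail w x k ≤ ∏ _z ∈ Finset.Icc x (x + k), pfun w 1 :=
        Finset.prod_le_prod (fun z _ => pfun_nonneg hpos z)
          fun z hz => pfun_le_pfun_one hpos hmono (by rw [Finset.mem_Icc] at hz; omega)
    _ = pfun w 1 ^ (k + 1) := by rw [Finset.prod_const, Int.card_Icc]; congr; omega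

theorem Pker_nonneg (hpos : ∀ z, 0 < w z) (x y : ℤ) : 0 ≤ Pker w x y := by
  rw [Pker]
  split_ifs
  · exact mul_nonneg (Finset.prod_nonneg fun z _ => pfun_nonneg hpos z)
      (div_nonneg (hpos _).le (add_pos (hpos _) (hpos _)).le)
  · exact le_rfl

theorem Pker_of_lt {x z : ℤ} (h : z < x - 1) : Pker w x z = 0 := by
  rw [Pker, if_neg (by omega)]

theorem Pker_sub_one (hpos : ∀ z, 0 < w z) (x : ℤ) : Pker w x (x - 1) = 1 - jumpTail w x 0 := by
  rw [Pker, if_pos le_rfl, Finset.Icc_eq_empty (by omega), Finset.prod_empty, one_mul,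
    sub_add_cancel, qfun_eq_one_sub_pfun hpos, jumpTail]
  simp

theorem Pker_add (hpos : ∀ z, 0 < w z) (x : ℤ) (k : ℕ) :
    Pker w x (x + k) = jumpTail w x k - jumpTail w x (k + 1) := by
  rw [Pker, if_pos (by omega), qfun_eq_one_sub_pfun hpos, jumpTail_succ, jumpTail]
  ring

theorem hasSum_Pker_mul_zpow (hpos : ∀ z, 0 < w z) (x : ℤ) {c : ℝ} (hc : c ≠ 0)
    (hA : Summable fun k => jumpTail w x k * c ^ k) :
    HasSum (fun z => Pker w x z * c ^ z)
      (c ^ x * (c⁻¹ + (1 - c⁻¹) * ∑' k, jumpTail w x k * c ^ k)) := by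
  have hinj : Function.Injective fun k : ℕ => x - 1 + k := fun k l h => by simpa using h
  have hrange : ∀ z ∉ Set.range (fun k : ℕ => x - 1 + k), Pker w x z * c ^ z = 0 := by
    intro z hz
    rw [Pker_of_lt, zero_mul]
    by_contra h
    exact hz ⟨(z - (x - 1)).toNat, show x - 1 + ((z - (x - 1)).toNat : ℤ) = z by omega⟩
  rw [← hinj.hasSum_iff hrange]
  have hsucc : ∀ k : ℕ, Pker w x (x - 1 + (k + 1 : ℕ)) * c ^ (x - 1 + (k + 1 : ℕ)) =
      c ^ x * ((jumpTail w x k - jumpTail w x (k + 1)) * c ^ k) := by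
    intro k
    rw [show x - 1 + ((k + 1 : ℕ) : ℤ) = x + k by push_cast; ring, Pker_add hpos,
      zpow_add₀ hc, zpow_natCast]
    ring
  have h0 : Pker w x (x - 1 + (0 : ℕ)) * c ^ (x - 1 + (0 : ℕ)) =
      c ^ x * (c⁻¹ * (1 - jumpTail w x 0)) := by
    rw [Nat.cast_zero, add_zero, Pker_sub_one hpos, zpow_sub_one₀ hc]
    ring
  have hup : HasSum (fun k : ℕ => Pker w x (x - 1 + (k + 1 : ℕ)) * c ^ (x - 1 + (k + 1 : ℕ)))
      (c ^ x * (c⁻¹ * jumpTail w x 0 + (1 - c⁻¹) * ∑' k, jumpTail w x k * c ^ k)) := by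
    simpa only [hsucc] using (hasSum_sub_succ_mul_pow hc hA).mul_left (c ^ x)
  have := hup.zero_add (f := fun k : ℕ => Pker w x (x - 1 + k) * c ^ (x - 1 + k))
  rwa [h0, ← mul_add, show ∀ a b t : ℝ, a * (1 - b) + (a * b + t) = a + t by intros; ring]
    at this

theorem jumpTail_mul_pow_le (hpos : ∀ z, 0 < w z) (hmono : Monotone w) {x : ℤ} (hx : 1 ≤ x)
    {c : ℝ} (hc : 0 ≤ c) (k : ℕ) :
    jumpTail w x k * c ^ k ≤ pfun w 1 * (pfun w 1 * c) ^ k := by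
  rw [mul_pow, ← mul_assoc, ← pow_succ']
  exact mul_le_mul_of_nonneg_right (jumpTail_le_pow hpos hmono hx k) (pow_nonneg hc k)

theorem summable_jumpTail_mul_pow (hpos : ∀ z, 0 < w z) (hmono : Monotone w) {x : ℤ}
    (hx : 1 ≤ x) {c : ℝ} (hc : 0 ≤ c) (hpc : pfun w 1 * c < 1) :
    Summable fun k => jumpTail w x k * c ^ k :=
  .of_nonneg_of_le (fun k => mul_nonneg (jumpTail_nonneg hpos x k) (pow_nonneg hc k))
    (jumpTail_mul_pow_le hpos hmono hx hc)
    ((summable_geometric_of_lt_one (mul_nonneg (pfun_nonneg hpos 1) hc) hpc).mul_left _)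

theorem tsum_jumpTail_mul_pow_le (hpos : ∀ z, 0 < w z) (hmono : Monotone w) {x : ℤ}
    (hx : 1 ≤ x) {c : ℝ} (hc : 0 ≤ c) (hpc : pfun w 1 * c < 1) :
    ∑' k, jumpTail w x k * c ^ k ≤ pfun w 1 / (1 - pfun w 1 * c) := by
  have hgeom := (hasSum_geometric_of_lt_one (mul_nonneg (pfun_nonneg hpos 1) hc) hpc).mul_left
    (pfun w 1)
  rw [div_eq_mul_inv, ← hgeom.tsum_eq]
  exact (summable_jumpTail_mul_pow hpos hmono hx hc hpc).tsum_le_tsum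
    (jumpTail_mul_pow_le hpos hmono hx hc) hgeom.summable

theorem tsum_killKernel_Pker_mul_zpow_le (hw : GoodWeight w) {x : ℤ} (hx : 1 ≤ x) {c : ℝ}
    (hc : 1 ≤ c) (hpc : pfun w 1 * c < 1) (S : Set ℤ) :
    ∑' z, killKernel (Pker w) S x z * ENNReal.ofReal (c ^ z) ≤
      ENNReal.ofReal (c⁻¹ + (1 - c⁻¹) * (pfun w 1 / (1 - pfun w 1 * c))) *
        ENNReal.ofReal (c ^ x) := by
  have hpos := hw.1
  have hc0 : 0 < c := by linarith
  have hsum := hasSum_Pker_mul_zpow hpos x hc0.ne'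
    (summable_jumpTail_mul_pow hpos (monotone_int_of_le_succ hw.2.1) hx hc0.le hpc)
  calc ∑' z, killKernel (Pker w) S x z * ENNReal.ofReal (c ^ z)
      ≤ ∑' z, ENNReal.ofReal (Pker w x z * c ^ z) := by
        refine ENNReal.tsum_le_tsum fun z => ?_
        rw [ENNReal.ofReal_mul (Pker_nonneg hpos x z)]
        exact mul_le_mul_left (Set.indicator_le_self _ _ z) _
    _ = ENNReal.ofReal (c ^ x * (c⁻¹ + (1 - c⁻¹) * ∑' k, jumpTail w x k * c ^ k)) := by
        rw [← ENNReal.ofReal_tsum_of_nonneg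
          (fun z => mul_nonneg (Pker_nonneg hpos x z) (zpow_nonneg hc0.le z)) hsum.summable,
          hsum.tsum_eq]
    _ ≤ _ := by
        rw [← ENNReal.ofReal_mul', mul_comm]
        · have : 0 ≤ 1 - c⁻¹ := sub_nonneg.2 (inv_le_one_of_one_le₀ hc)
          gcongr
          exact tsum_jumpTail_mul_pow_le hpos (monotone_int_of_le_succ hw.2.1) hx hc0.le hpc
        · exact zpow_nonneg hc0.le x

end Pker

theorem KChain.measure_forall_ne_zero_le {w : ℤ → ℝ} (hw : GoodWeight w) {c : ℝ} (hc : 1 ≤ c)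
    (hpc : pfun w 1 * c < 1) {Ω : Type*} [MeasurableSpace Ω] {μ : Measure Ω}
    {η : ℕ → Ω → ℤ} {y : ℤ} (hη : KChain μ (Pker w) η y) (hy : 0 ≤ y) (n : ℕ) :
    μ {ω | ∀ m ≤ n, η m ω ≠ 0} ≤
      ENNReal.ofReal ((c⁻¹ + (1 - c⁻¹) * (pfun w 1 / (1 - pfun w 1 * c))) ^ n * c ^ y) := by
  set r := c⁻¹ + (1 - c⁻¹) * (pfun w 1 / (1 - pfun w 1 * c))
  have hkill := hη.measure_forall_mem_le (Pker_nonneg hw.1) {z | z ≠ 0} n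
  rcases hy.eq_or_lt with rfl | hy
  · exact hkill.trans (by simp)
  have hr : 0 ≤ r := by
    have := inv_le_one_of_one_le₀ hc
    have : 0 ≤ pfun w 1 / (1 - pfun w 1 * c) :=
      div_nonneg (pfun_nonneg hw.1 1) (by linarith)
    positivity
  have hclosed : ∀ x ∈ {z : ℤ | 1 ≤ z}, ∀ z, killKernel (Pker w) {z | z ≠ 0} x z ≠ 0 →
      z ∈ {z : ℤ | 1 ≤ z} := by
    intro x (hx : 1 ≤ x) z hz
    by_contra hz1
    rcases (show z ≤ 0 by simp at hz1; omega).lt_or_eq with hlt | rfl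
    · exact hz (by simp [killKernel, Pker_of_lt (show z < x - 1 by omega)])
    · exact hz (by simp [killKernel])
  calc μ {ω | ∀ m ≤ n, η m ω ≠ 0} ≤ pathMass (killKernel (Pker w) {z | z ≠ 0}) n y := by
        simpa [hy.ne'] using hkill
    _ ≤ ENNReal.ofReal r ^ n * ENNReal.ofReal (c ^ y) :=
        pathMass_le_of_drift hclosed
          (fun x (hx : 1 ≤ x) => ENNReal.one_le_ofReal.2 (one_le_zpow₀ hc (by omega)))
          (fun x hx => tsum_killKernel_Pker_mul_zpow_le hw hx hc hpc _) n y hy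
    _ = _ := by rw [← ENNReal.ofReal_pow hr, ← ENNReal.ofReal_mul (pow_nonneg hr n)]

/-- under the extra assumption `w(-1) < w(1)`, there are `γ > 0`, `C < ∞`,
`β > 0` such that for every starting point `y ≥ 0` the hitting time
`θ₀ := min{n ≥ 0 : η(n) = 0}` of the chain with kernel `P` started at `y` satisfies
`E[exp(γ θ₀)] ≤ C e^{(β/2) y}`. -/
theorem stmt_7 (w : ℤ → ℝ) (hw : GoodWeight w) (hw1 : w (-1) < w 1) :
    ∃ γ > (0 : ℝ), ∃ C : ℝ, ∃ β > (0 : ℝ), ∀ y : ℤ, 0 ≤ y →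
      ∀ (Ω : Type) [MeasurableSpace Ω] (μ : Measure Ω) [IsProbabilityMeasure μ]
        (η : ℕ → Ω → ℤ), KChain μ (Pker w) η y →
        (∑' n : ℕ, ENNReal.ofReal (Real.exp (γ * n)) *
            μ {ω | η n ω = 0 ∧ ∀ m < n, η m ω ≠ 0}) +
          ⊤ * μ {ω | ∀ n, η n ω ≠ 0} ≤
        ENNReal.ofReal (C * Real.exp (β / 2 * y)) := by
  have hp0 : 0 < pfun w 1 := div_pos (hw.1 _) (add_pos (hw.1 _) (hw.1 _))
  have hp := pfun_one_lt_half hw.1 hw1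
  set p := pfun w 1 with hp_def
  set c := (2 * p)⁻¹
  have hc : 1 < c := by rw [one_lt_inv₀ (by positivity)]; linarith
  have hpc : p * c = 1 / 2 := by simp only [c]; field_simp
  have hrate : c⁻¹ + (1 - c⁻¹) * (p / (1 - p * c)) = 4 * p * (1 - p) := by
    rw [hpc, inv_inv]
    ring
  set s := √(4 * p * (1 - p))
  have hs2 : s ^ 2 = 4 * p * (1 - p) := Real.sq_sqrt (by nlinarith)
  have hs0 : 0 < s := Real.sqrt_pos.2 (by nlinarith)
  have hs1 : s < 1 := by nlinarith
  refine ⟨Real.log s⁻¹, Real.log_pos ((one_lt_inv₀ hs0).2 hs1), 1 + s⁻¹ * (1 - s)⁻¹,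
    2 * Real.log c, by have := Real.log_pos hc; positivity, ?_⟩
  intro y hy Ω _ μ _ η hη
  have hcy : c ^ y = Real.exp (2 * Real.log c / 2 * y) := by
    rw [← Real.rpow_intCast, Real.rpow_def_of_pos (by positivity)]
    ring_nf
  rw [← hcy]
  refine tsum_exp_mul_measure_hit_add_top_le hs0 hs1 (one_le_zpow₀ hc.le hy) fun n => ?_
  have hstay := hη.measure_forall_ne_zero_le hw hc.le (by rw [hpc]; norm_num) hy n
  rwa [← hp_def, hrate, ← hs2, ← pow_mul] at hstay
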